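/- Let φ : T → T be Lipschitz and A = { v ∈ T : φ is not constant on S_v }. If A is infinite and |φ(v)| does not tend to infinity as |v| → ∞ along v ∈ A, then there exists f ∈ Lip_0(T) such that f ∘ φ ∉ Lip_0(T). -/

import Mathlib

/-- An infinite, locally finite rooted tree in which every vertex other than
the root has degree greater than 1, together with the parent map. -/
structure LipTree (V : Type*) where
  root : V
  G : SimpleGraph V
  isTree : G.IsTree
  locFin : ∀ v : V, (G.neighborSet v).Finite
  infinite : Infinite V
  deg_gt : ∀ v : V, v ≠ root → 1 < (G.neighborSet v).ncard
  par : V → V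
  par_root : par root = root
  adj_par : ∀ v : V, v ≠ root → G.Adj v (par v)
  dist_par : ∀ v : V, v ≠ root → G.dist (par v) root + 1 = G.dist v root

namespace LipTree

variable {V : Type*}

/-- `|v|`, the distance from `v` to the root. -/
noncomputable def depth (T : LipTree V) (v : V) : ℕ := T.G.dist v T.root

/-- membership in the Lipschitz space `Lip(T)`. -/
def MemLip (T : LipTree V) (f : V → ℂ) : Prop :=
  ∃ C : ℝ, ∀ v : V, v ≠ T.root → ‖f v - f (T.par v)‖ ≤ C

/-- membership in the little Lipschitz space `Lip₀(T)`. -/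
def MemLip0 (T : LipTree V) (f : V → ℂ) : Prop :=
  T.MemLip f ∧ ∀ ε : ℝ, 0 < ε → ∃ N : ℕ, ∀ v : V, v ≠ T.root → N ≤ T.depth v →
    ‖f v - f (T.par v)‖ < ε

/-- the norm `‖f‖_Lip = max {|f(root)|, sup_{v ≠ root} |f(v) - f(v⁻)|}`. -/
noncomputable def normLip (T : LipTree V) (f : V → ℂ) : ℝ :=
  max (‖f T.root‖)
    (sSup {r : ℝ | ∃ v : V, v ≠ T.root ∧ r = ‖f v - f (T.par v)‖})

/-- `φ` is a Lipschitz self-map of the tree. -/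
noncomputable def LipschitzSelfMap (T : LipTree V) (φ : V → V) : Prop :=
  ∃ C : ℕ, ∀ v : V, v ≠ T.root → T.G.dist (φ v) (φ (T.par v)) ≤ C

/-- the Lipschitz number `λ_φ`. -/
noncomputable def lipNum (T : LipTree V) (φ : V → V) : ℝ :=
  sSup {r : ℝ | ∃ v : V, v ≠ T.root ∧ r = (T.G.dist (φ v) (φ (T.par v)) : ℝ)}

/-- the composition operator `C_φ` maps `Lip₀` into itself and is bounded there. -/
def BoundedOnLip0 (T : LipTree V) (φ : V → V) : Prop :=
  (∀ f : V → ℂ, T.MemLip0 f → T.MemLip0 (f ∘ φ)) ∧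
  ∃ C : ℝ, ∀ f : V → ℂ, T.MemLip0 f → T.normLip (f ∘ φ) ≤ C * T.normLip f

/-- `u` belongs to the sector `S_v` determined by `v`. -/
def InSector (T : LipTree V) (v u : V) : Prop := ∃ k : ℕ, T.par^[k] u = v

end LipTree

/-!
Since `|φ v|` stays bounded along arbitrarily deep `v ∈ A`, and `φ` is not constant on `S_v`,
walking up from a vertex of `S_v` where `φ` differs from `φ v` gives an edge `(u, u⁻)` below `v`
across which `φ` jumps, with `|φ u|` bounded by the Lipschitz constant. These values lie in a
finite ball, so one value `a` recurs at arbitrarily deep jumps. The indicator of `a` is finitely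
supported, hence in `Lip₀`, but its pullback by `φ` has jumps of size `1` arbitrarily deep.
-/

open Filter

theorem exists_frequently_eq_of_finite {ι β : Type*} {l : Filter ι} [l.NeBot] {B : Set β}
    (hB : B.Finite) {g : ι → β} (hg : ∀ᶠ i in l, g i ∈ B) : ∃ b ∈ B, ∃ᶠ i in l, g i = b := by
  by_contra! hne
  obtain ⟨i, hi, hiB⟩ := ((hB.eventually_all.2 hne).and hg).exists
  exact hi _ hiB rfl

namespace LipTree

variable {V : Type*} (T : LipTree V)

theorem depth_par_add_one {v : V} (hv : v ≠ T.root) : T.depth (T.par v) + 1 = T.depth v :=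
  T.dist_par v hv

theorem depth_par_le (v : V) : T.depth (T.par v) ≤ T.depth v := by
  by_cases hv : v = T.root
  · rw [hv, T.par_root]
  · have := T.depth_par_add_one hv
    omega

theorem depth_le_of_inSector {v u : V} (h : T.InSector v u) : T.depth v ≤ T.depth u := by
  obtain ⟨k, rfl⟩ := h
  induction k with
  | zero => rfl
  | succ k ih => exact (Function.iterate_succ_apply' T.par k u ▸ T.depth_par_le _).trans ih

theorem depth_le_dist_add_depth (a b : V) : T.depth a ≤ T.G.dist a b + T.depth b :=
  T.isTree.connected.dist_triangle

theorem finite_setOf_depth_le (R : ℕ) : {v : V | T.depth v ≤ R}.Finite := by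
  induction R with
  | zero =>
    refine (Set.finite_singleton T.root).subset fun v hv => ?_
    exact T.isTree.connected.dist_eq_zero_iff.mp (Nat.le_zero.mp hv)
  | succ R ih =>
    refine (ih.union (ih.biUnion fun w _ => T.locFin w)).subset fun v hv_le => ?_
    by_cases hvR : T.depth v ≤ R
    · exact Or.inl hvR
    have hv : v ≠ T.root := by
      rintro rfl
      exact hvR (SimpleGraph.dist_self.trans_le (Nat.zero_le R))
    have hpar : T.depth (T.par v) ≤ R := by
      have := T.depth_par_add_one hv
      have : T.depth v ≤ R + 1 := hv_le
      omega
    exact Or.inr (Set.mem_biUnion hpar (T.adj_par v hv).symm)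

theorem exists_jump_of_not_const_on_sector {α : Type*} (φ : V → α) {v : V}
    (hφ : ¬ ∀ u₁ u₂ : V, T.InSector v u₁ → T.InSector v u₂ → φ u₁ = φ u₂) :
    ∃ u, T.InSector v u ∧ φ u ≠ φ (T.par u) ∧ φ (T.par u) = φ v := by
  obtain ⟨w, ⟨k, hwk⟩, hw⟩ : ∃ w, T.InSector v w ∧ φ w ≠ φ v := by
    by_contra! hconst
    exact hφ fun u₁ u₂ h₁ h₂ => (hconst u₁ h₁).trans (hconst u₂ h₂).symm
  induction k generalizing w with
  | zero => exact absurd (congrArg φ hwk) hw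
  | succ k ih =>
    rw [Function.iterate_succ_apply] at hwk
    by_cases hpar : φ (T.par w) = φ v
    · exact ⟨w, ⟨k + 1, hwk⟩, hpar ▸ hw, hpar⟩
    · exact ih (T.par w) hpar hwk

theorem memLip0_of_finite_support {f : V → ℂ} (hf : (Function.support f).Finite) :
    T.MemLip0 f := by
  obtain ⟨B, hB⟩ := (hf.image (‖f ·‖)).bddAbove
  obtain ⟨D, hD⟩ := (hf.image T.depth).bddAbove
  have hnorm : ∀ x, ‖f x‖ ≤ max B 0 := fun x => by
    by_cases hx : f x = 0
    · simp [hx]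
    · exact (hB ⟨x, hx, rfl⟩).trans (le_max_left _ _)
  have hzero : ∀ x, D < T.depth x → f x = 0 := fun x hx => by
    by_contra h
    exact absurd (hD ⟨x, h, rfl⟩) (not_le.mpr hx)
  refine ⟨⟨2 * max B 0, fun v _ => ?_⟩, fun ε hε => ⟨D + 2, fun v hv hDv => ?_⟩⟩
  · linarith [norm_sub_le (f v) (f (T.par v)), hnorm v, hnorm (T.par v)]
  · have := T.depth_par_add_one hv
    rw [hzero v (by omega), hzero (T.par v) (by omega), sub_zero, norm_zero]
    exact hε

theorem not_memLip0_of_forall_exists_jump {g : V → ℂ} {δ : ℝ} (hδ : 0 < δ)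
    (h : ∀ N : ℕ, ∃ v, N ≤ T.depth v ∧ δ ≤ ‖g v - g (T.par v)‖) : ¬ T.MemLip0 g := by
  rintro ⟨-, hsmall⟩
  obtain ⟨N, hN⟩ := hsmall δ hδ
  obtain ⟨v, hNv, hjump⟩ := h N
  have hv : v ≠ T.root := by
    rintro rfl
    rw [T.par_root, sub_self, norm_zero] at hjump
    exact hδ.not_ge hjump
  exact (hN v hv hNv).not_ge hjump

end LipTree

theorem exists_not_lip0_general {V : Type*} (T : LipTree V) (φ : V → V)
    (hφ : T.LipschitzSelfMap φ)
    (A : Set V)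
    (hA : A = {v : V | ¬ ∀ u₁ u₂ : V, T.InSector v u₁ → T.InSector v u₂ → φ u₁ = φ u₂})
    (hnd : ¬ ∀ M : ℕ, ∃ N : ℕ, ∀ v ∈ A, N ≤ T.depth v → M ≤ T.depth (φ v)) :
    ∃ f : V → ℂ, T.MemLip0 f ∧ ¬ T.MemLip0 (f ∘ φ) := by
  obtain ⟨C, hC⟩ := hφ
  push Not at hnd
  obtain ⟨M, hM⟩ := hnd
  have deep_jumps : ∀ n : ℕ, ∃ u, n ≤ T.depth u ∧ φ u ≠ φ (T.par u) ∧ T.depth (φ u) ≤ M + C := by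
    intro n
    obtain ⟨v, hvA, hnv, hvM⟩ := hM n
    obtain ⟨u, hvu, hjump, hpar⟩ := T.exists_jump_of_not_const_on_sector φ (hA ▸ hvA)
    have hu : u ≠ T.root := fun h => hjump (by rw [h, T.par_root])
    have hφu : T.depth (φ u) ≤ C + T.depth (φ v) :=
      calc T.depth (φ u) ≤ T.G.dist (φ u) (φ (T.par u)) + T.depth (φ (T.par u)) :=
            T.depth_le_dist_add_depth _ _
        _ ≤ C + T.depth (φ v) := by rw [← hpar]; exact Nat.add_le_add_right (hC u hu) _
    exact ⟨u, hnv.trans (T.depth_le_of_inSector hvu), hjump, by omega⟩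
  choose u hu_deep hu_jump hu_ball using deep_jumps
  obtain ⟨a, -, ha⟩ := exists_frequently_eq_of_finite (T.finite_setOf_depth_le (M + C))
    (l := atTop) (Eventually.of_forall hu_ball)
  classical
  refine ⟨Pi.single a 1, T.memLip0_of_finite_support
    ((Set.finite_singleton a).subset Pi.support_single_subset),
    T.not_memLip0_of_forall_exists_jump one_pos fun N => ?_⟩
  obtain ⟨n, hNn, hna⟩ := frequently_atTop.1 ha N
  have hpar : φ (T.par (u n)) ≠ a := hna ▸ (hu_jump n).symm
  refine ⟨u n, hNn.trans (hu_deep n), ?_⟩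
  simp [hna, hpar]

/-- If `A` (the set of `v` on whose sector `φ` is not constant) is infinite and `|φ(v)|`
does not tend to `∞` along `v ∈ A`, then some `f ∈ Lip₀` has `f ∘ φ ∉ Lip₀`. -/
theorem exists_not_lip0 {V : Type*} (T : LipTree V) (φ : V → V)
    (hφ : T.LipschitzSelfMap φ)
    (A : Set V)
    (hA : A = {v : V | ¬ ∀ u₁ u₂ : V, T.InSector v u₁ → T.InSector v u₂ → φ u₁ = φ u₂})
    (hAinf : A.Infinite)
    (hnd : ¬ ∀ M : ℕ, ∃ N : ℕ, ∀ v ∈ A, N ≤ T.depth v → M ≤ T.depth (φ v)) :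
    ∃ f : V → ℂ, T.MemLip0 f ∧ ¬ T.MemLip0 (f ∘ φ) :=
  exists_not_lip0_general T φ hφ A hA hnd
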